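/- In the Artin group B_{D_m} of type D_m with m even, there is no element t such that conjugation by t fixes the standard generators σ_3,...,σ_m and interchanges σ_1 and σ_2. Equivalently, the diagram automorphism of the Coxeter group of type D_m (m even) interchanging the two fork generators is not inner. -/

import Mathlib

/-- Adjacency in the Dynkin diagram `D_m` (vertices `0,…,m-1`, with the fork
generators `0` and `1` both adjacent to `2`, and a chain `2 — 3 — ⋯ — (m-1)`). -/
def DmAdj {m : ℕ} (i j : Fin m) : Prop :=
  (i.val = 0 ∧ j.val = 2) ∨ (i.val = 2 ∧ j.val = 0) ∨
  (i.val = 1 ∧ j.val = 2) ∨ (i.val = 2 ∧ j.val = 1) ∨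
  (2 ≤ i.val ∧ j.val = i.val + 1) ∨ (2 ≤ j.val ∧ i.val = j.val + 1)

/-- The braid relations of type `D_m`. -/
def braidRelsD (m : ℕ) : Set (FreeGroup (Fin m)) :=
  {w | ∃ i j : Fin m, DmAdj i j ∧
      w = FreeGroup.of i * FreeGroup.of j * FreeGroup.of i *
          (FreeGroup.of j * FreeGroup.of i * FreeGroup.of j)⁻¹} ∪
  {w | ∃ i j : Fin m, i ≠ j ∧ ¬ DmAdj i j ∧
      w = FreeGroup.of i * FreeGroup.of j * (FreeGroup.of j * FreeGroup.of i)⁻¹}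

/-- The Artin (generalized braid) group of type `D_m`. -/
abbrev BraidD (m : ℕ) := PresentedGroup (braidRelsD m)

/-- The standard generators `σ_i`. -/
def σD {m : ℕ} (i : Fin m) : BraidD m := PresentedGroup.of i

/-! The images of `σ₁, …, σ_m` in the group of signed permutations of `Fin m` satisfy the
`D_m` braid relations: `σ_i ↦ swap (i-1) i` for the chain generators, and the fork generators go
to `swap 0 1` and to its conjugate by the sign change `c` of coordinate `0`. So `c` realises the
diagram automorphism inside the signed permutations. If `t` existed, its image `x` would make
`c⁻¹ x` commute with every adjacent transposition, so all signs of `c⁻¹ x` agree and its sign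
product is `ε ^ m = 1`, as `m` is even. But the product of the signs is a character that is trivial
on the image of the Artin group and takes the value `-1` at `c`. -/

open Equiv SemidirectProduct

theorem commute_inv_mul_of_conj_eq_conj {G : Type*} [Group G] {c x g : G}
    (h : x * g * x⁻¹ = c * g * c⁻¹) : Commute (c⁻¹ * x) g := by
  have hxg : x * g = c * g * c⁻¹ * x := by rw [← h]; group
  rw [Commute, SemiconjBy, mul_assoc, hxg]
  group

namespace SemidirectProduct

variable {N G : Type*} [Group N] [Group G] {φ : G →* MulAut N}

theorem commute_inl_inr_iff {n : N} {g : G} :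
    Commute (inl n : N ⋊[φ] G) (inr g) ↔ φ g n = n := by
  rw [Commute, SemiconjBy, SemidirectProduct.ext_iff]
  simp [eq_comm]

theorem aut_left_eq_of_commute_inr {x : N ⋊[φ] G} {g : G} (h : Commute x (inr g)) :
    φ g x.left = x.left := by
  simpa using (congrArg left h.eq).symm

end SemidirectProduct

abbrev SignedPerm (ι : Type*) := (ι → ℤˣ) ⋊[mulAutArrow] Perm ι

namespace SignedPerm

variable {ι : Type*}

theorem mulAutArrow_apply (σ : Perm ι) (ν : ι → ℤˣ) (i : ι) :
    mulAutArrow σ ν i = ν (σ⁻¹ i) :=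
  rfl

def signProd [Fintype ι] : SignedPerm ι →* ℤˣ where
  toFun x := ∏ i, x.left i
  map_one' := Finset.prod_const_one
  map_mul' x y := by
    simp only [mul_left, Pi.mul_apply, mulAutArrow_apply, Finset.prod_mul_distrib,
      Equiv.prod_comp]

theorem signProd_inr [Fintype ι] (σ : Perm ι) : signProd (inr σ) = 1 :=
  Finset.prod_const_one

theorem left_eq_of_commute_inr_swap [DecidableEq ι] {x : SignedPerm ι} {a b : ι}
    (h : Commute x (inr (swap a b))) : x.left a = x.left b := by
  simpa [mulAutArrow_apply, -mulAutArrow_apply_apply] using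
    congrFun (aut_left_eq_of_commute_inr h) b

variable [DecidableEq ι]

def signFlip (k : ι) : SignedPerm ι := inl (Pi.mulSingle k (-1))

theorem signProd_signFlip [Fintype ι] (k : ι) : signProd (signFlip k) = -1 :=
  Fintype.prod_pi_mulSingle' k (-1)

theorem commute_signFlip_inr {k : ι} {σ : Perm ι} (hσ : σ k = k) :
    Commute (signFlip k) (inr σ) := by
  rw [signFlip, commute_inl_inr_iff]
  funext w
  simp [mulAutArrow_apply, -mulAutArrow_apply_apply, Pi.mulSingle_apply, Equiv.symm_apply_eq,
    hσ]

theorem commute_inr_swap_conj_signFlip {a b : ι} (hab : a ≠ b) :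
    Commute (inr (swap a b)) (signFlip a * inr (swap a b) * (signFlip a)⁻¹) := by
  rw [Commute, SemiconjBy, SemidirectProduct.ext_iff]
  refine ⟨?_, rfl⟩
  funext w
  simp [signFlip, mul_left, inv_left, mulAutArrow_apply, -mulAutArrow_apply_apply,
    Pi.mulSingle_apply, swap_apply_def]
  split_ifs <;> simp_all

end SignedPerm

theorem Equiv.swap_braid {α : Type*} [DecidableEq α] {a b c : α} (hab : a ≠ b) (hbc : b ≠ c)
    (hac : a ≠ c) :
    swap a b * swap b c * swap a b = swap b c * swap a b * swap b c := by
  have hleft : swap b a * swap c b * swap b a = swap a c :=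
    swap_mul_swap_mul_swap hbc.symm hac.symm
  rw [swap_comm b a, swap_comm c b] at hleft
  rw [hleft, swap_mul_swap_mul_swap hab hac, swap_comm]

section AdjacentSwaps

variable {m : ℕ}

def adjSwap (k : ℕ) (hk : k + 1 < m) : Perm (Fin m) := swap ⟨k, by omega⟩ ⟨k + 1, hk⟩

theorem adjSwap_braid {k l : ℕ} (hk : k + 1 < m) (hl : l + 1 < m) (hkl : l = k + 1) :
    adjSwap k hk * adjSwap l hl * adjSwap k hk = adjSwap l hl * adjSwap k hk * adjSwap l hl := by
  subst hkl
  exact swap_braid (by simp [Fin.ext_iff]) (by simp [Fin.ext_iff]) (by simp [Fin.ext_iff]; omega)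

theorem adjSwap_commute {k l : ℕ} (hk : k + 1 < m) (hl : l + 1 < m) (hkl : k + 2 ≤ l) :
    Commute (adjSwap k hk) (adjSwap l hl) :=
  (Perm.disjoint_swap_swap (by simp [Fin.ext_iff]; omega)).commute

theorem SignedPerm.signProd_eq_one_of_commute_adjSwap (hme : Even m) {y : SignedPerm (Fin m)}
    (h : ∀ k (hk : k + 1 < m), Commute y (inr (adjSwap k hk))) : signProd y = 1 := by
  obtain rfl | hm0 := m.eq_zero_or_pos
  · rfl
  have hconst : ∀ k (hk : k < m), y.left ⟨k, hk⟩ = y.left ⟨0, hm0⟩ := by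
    intro k hk
    induction k with
    | zero => rfl
    | succ k ih => exact (left_eq_of_commute_inr_swap (h k hk)).symm.trans (ih (by omega))
  calc signProd y = ∏ i, y.left i := rfl
    _ = ∏ _ : Fin m, y.left ⟨0, hm0⟩ := Finset.prod_congr rfl fun i _ => hconst i.val i.isLt
    _ = 1 := by
      rw [Finset.prod_const, Finset.card_univ, Fintype.card_fin, Int.units_pow_eq_pow_mod_two,
        Nat.even_iff.mp hme, pow_zero]

end AdjacentSwaps

namespace BraidD

open SignedPerm

variable {m : ℕ} (hm : 2 ≤ m)

-- `i.val - 1` truncates to `0` at `i = 0`: both fork generators lie over `swap 0 1`.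
def reflD (i : Fin m) : SignedPerm (Fin m) :=
  if i.val = 1 then
    signFlip ⟨0, by omega⟩ * inr (adjSwap 0 hm) * (signFlip ⟨0, by omega⟩)⁻¹
  else inr (adjSwap (i.val - 1) (by omega))

theorem reflD_of_ne_one {i : Fin m} (hi : i.val ≠ 1) :
    reflD hm i = inr (adjSwap (i.val - 1) (by omega)) :=
  if_neg hi

theorem reflD_one :
    reflD hm ⟨1, hm⟩ =
      signFlip ⟨0, by omega⟩ * reflD hm ⟨0, by omega⟩ * (signFlip ⟨0, by omega⟩)⁻¹ :=
  rfl

theorem commute_signFlip_reflD {i : Fin m} (hi : 2 ≤ i.val) :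
    Commute (signFlip ⟨0, by omega⟩) (reflD hm i) := by
  rw [reflD_of_ne_one hm (by omega)]
  exact commute_signFlip_inr <| swap_apply_of_ne_of_ne
    (Fin.ne_of_val_ne (by dsimp; omega)) (Fin.ne_of_val_ne (by dsimp; omega))

theorem reflD_braid_of_ne_one {i j : Fin m} (hi : i.val ≠ 1) (hj : j.val ≠ 1)
    (h : DmAdj i j) :
    reflD hm i * reflD hm j * reflD hm i = reflD hm j * reflD hm i * reflD hm j := by
  simp only [reflD_of_ne_one hm hi, reflD_of_ne_one hm hj, ← map_mul]
  unfold DmAdj at h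
  rcases (by omega : j.val - 1 = i.val - 1 + 1 ∨ i.val - 1 = j.val - 1 + 1) with hij | hji
  · rw [adjSwap_braid _ _ hij]
  · rw [adjSwap_braid _ _ hji]

theorem reflD_commute_of_ne_one {i j : Fin m} (hi : i.val ≠ 1) (hj : j.val ≠ 1) (hij : i ≠ j)
    (h : ¬ DmAdj i j) : Commute (reflD hm i) (reflD hm j) := by
  rw [reflD_of_ne_one hm hi, reflD_of_ne_one hm hj]
  unfold DmAdj at h
  rw [ne_eq, Fin.ext_iff] at hij
  rcases (by omega : i.val - 1 + 2 ≤ j.val - 1 ∨ j.val - 1 + 2 ≤ i.val - 1) with hij | hji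
  · exact (adjSwap_commute _ _ hij).map inr
  · exact ((adjSwap_commute _ _ hji).map inr).symm

theorem reflD_braid {i j : Fin m} (h : DmAdj i j) :
    reflD hm i * reflD hm j * reflD hm i = reflD hm j * reflD hm i * reflD hm j := by
  wlog hj : j.val ≠ 1 generalizing i j
  · exact (this (by unfold DmAdj at h ⊢; omega) (by unfold DmAdj at h; omega)).symm
  by_cases hi : i.val = 1
  · obtain rfl : i = ⟨1, hm⟩ := Fin.ext hi
    have hj2 : 2 ≤ j.val := by unfold DmAdj at h; omega
    have h0 := reflD_braid_of_ne_one hm (i := ⟨0, by omega⟩) zero_ne_one hj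
      (by dsimp only [DmAdj] at h ⊢; omega)
    simpa only [map_mul, MulAut.conj_apply, ← reflD_one,
      (commute_signFlip_reflD hm hj2).mul_inv_cancel]
      using congrArg (MulAut.conj (signFlip ⟨0, by omega⟩)) h0
  · exact reflD_braid_of_ne_one hm hi hj h

theorem reflD_commute {i j : Fin m} (hij : i ≠ j) (h : ¬ DmAdj i j) :
    Commute (reflD hm i) (reflD hm j) := by
  wlog hj : j.val ≠ 1 generalizing i j
  · refine (this hij.symm (by unfold DmAdj at h ⊢; omega) ?_).symm
    rw [ne_eq, Fin.ext_iff] at hij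
    omega
  by_cases hi : i.val = 1
  · obtain rfl : i = ⟨1, hm⟩ := Fin.ext hi
    by_cases hj0 : j.val = 0
    · obtain rfl : j = ⟨0, Nat.zero_lt_of_lt hm⟩ := Fin.ext hj0
      rw [reflD_one, reflD_of_ne_one hm (i := ⟨0, _⟩) zero_ne_one]
      exact (commute_inr_swap_conj_signFlip (Fin.ne_of_val_ne zero_ne_one)).symm
    · have hj2 : 2 ≤ j.val := by omega
      have h0 := reflD_commute_of_ne_one hm (i := ⟨0, by omega⟩) zero_ne_one hj
        (Fin.ne_of_val_ne (by dsimp; omega)) (by dsimp only [DmAdj] at h ⊢; omega)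
      simpa only [MulAut.conj_apply, ← reflD_one,
        (commute_signFlip_reflD hm hj2).mul_inv_cancel]
        using h0.map (MulAut.conj (signFlip ⟨0, by omega⟩))
  · exact reflD_commute_of_ne_one hm hi hj hij h

theorem reflD_rels : ∀ r ∈ braidRelsD m, FreeGroup.lift (reflD hm) r = 1 := by
  rintro r (⟨i, j, h, rfl⟩ | ⟨i, j, hij, h, rfl⟩)
  all_goals simp only [map_mul, map_inv, FreeGroup.lift_apply_of, mul_inv_eq_one]
  · exact reflD_braid hm h
  · exact (reflD_commute hm hij h).eq

def toSignedPerm : BraidD m →* SignedPerm (Fin m) := PresentedGroup.toGroup (reflD_rels hm)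

theorem toSignedPerm_σD (i : Fin m) : toSignedPerm hm (σD i) = reflD hm i :=
  PresentedGroup.toGroup.of _

theorem signProd_reflD (i : Fin m) : signProd (reflD hm i) = 1 := by
  unfold reflD
  split_ifs
  · simp [signProd_inr]
  · exact signProd_inr _

theorem signProd_toSignedPerm (t : BraidD m) : signProd (toSignedPerm hm t) = 1 := by
  have : signProd.comp (toSignedPerm hm) = 1 :=
    PresentedGroup.ext fun i =>
      (congrArg signProd (toSignedPerm_σD hm i)).trans (signProd_reflD hm i)
  exact DFunLike.congr_fun this t

end BraidD

open SignedPerm BraidD in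
/-- In the Artin group `B_{D_m}` of type `D_m` with `m` even, there is
no element `t` such that conjugation by `t` fixes the standard generators `σ₃,…,σ_m`
and interchanges the fork generators `σ₁` and `σ₂` (here indexed `0` and `1`). -/
theorem stmt_7 (m : ℕ) (hm : 4 ≤ m) (hme : Even m) :
    ¬ ∃ t : BraidD m,
      (∀ i : Fin m, 2 ≤ i.val → t * σD i * t⁻¹ = σD i) ∧
      t * σD (⟨0, by omega⟩ : Fin m) * t⁻¹ = σD ⟨1, by omega⟩ ∧
      t * σD (⟨1, by omega⟩ : Fin m) * t⁻¹ = σD ⟨0, by omega⟩ := by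
  rintro ⟨t, hfix, hswap, -⟩
  have hm2 : 2 ≤ m := by omega
  set x := toSignedPerm hm2 t
  set c : SignedPerm (Fin m) := signFlip ⟨0, by omega⟩
  have hconj {i j : Fin m} (h : t * σD i * t⁻¹ = σD j) :
      x * reflD hm2 i * x⁻¹ = reflD hm2 j := by
    simpa only [map_mul, map_inv, toSignedPerm_σD] using congrArg (toSignedPerm hm2) h
  have hcomm : ∀ k (hk : k + 1 < m), Commute (c⁻¹ * x) (inr (adjSwap k hk)) := by
    rintro (_ | k) hk
    · exact commute_inv_mul_of_conj_eq_conj (hconj hswap)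
    · have hk2 : 2 ≤ k + 2 := by omega
      have h := commute_inv_mul_of_conj_eq_conj (c := c) (g := reflD hm2 ⟨k + 2, hk⟩) <| by
        rw [hconj (hfix _ hk2), (commute_signFlip_reflD hm2 hk2).mul_inv_cancel]
      rwa [reflD_of_ne_one hm2 (by simp)] at h
  have hsign := signProd_eq_one_of_commute_adjSwap hme hcomm
  rw [map_mul, map_inv, signProd_signFlip, signProd_toSignedPerm] at hsign
  exact absurd hsign (by decide)
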